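/- Let Q be the integer program: minimize Σ_{r∈R} x_r subject to Σ_{r∈N(v)} x_r ≥ 1 for all v ∈ V, x_r ∈ {0,1}, where R is a set of disjoint leftward-directed rays, V a set of disjoint vertical segments each intersecting some ray, and N(v) is the set of rays intersecting v. Then the set S returned by the MOD-SSR algorithm satisfies |S| ≤ 2·OPT(Q_l), where OPT(Q_l) is the optimum of the LP relaxation. Consequently OPT(Q) ≤ 2·OPT(Q_l). -/

import Mathlib

attribute [local instance] Classical.propDecidable

/-- A leftward-directed horizontal ray, given by its right endpoint `(x, y)`:
the point set `{(x', y) : x' ≤ x}`. -/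
structure Ray where
  x : ℝ
  y : ℝ

/-- A vertical segment with `x`-coordinate `x` and `y`-range `[lo, hi]`. -/
structure VSeg where
  x : ℝ
  lo : ℝ
  hi : ℝ

/-- A leftward-directed ray intersects a vertical segment iff the segment's
`x`-coordinate is at most the ray's right endpoint and the ray's height lies
in the segment's `y`-range. -/
def hits (r : Ray) (v : VSeg) : Prop :=
  v.x ≤ r.x ∧ v.lo ≤ r.y ∧ r.y ≤ v.hi

/-- A ray `r` of the surviving set `Rset` is critical if some surviving segment
intersects `r` and no other surviving ray. -/
def critical (Rset : Finset Ray) (Vset : Finset VSeg) (r : Ray) : Prop :=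
  r ∈ Rset ∧ ∃ v ∈ Vset, hits r v ∧ ∀ r' ∈ Rset, hits r' v → r' = r

/-- `r'` lies just above `r` within the set `D` of rays. -/
def justAbove (D : Finset Ray) (r r' : Ray) : Prop :=
  r ∈ D ∧ r' ∈ D ∧ r.y < r'.y ∧ ∀ r'' ∈ D, ¬ (r.y < r''.y ∧ r''.y < r'.y)

/-- An execution trace of the MOD-SSR token-passing algorithm on the SSR instance
`(R, V)`.  `Rs i, Vs i, Ss i, Tok i` are the surviving rays, surviving segments,
heuristic solution and tokens at the end of iteration `i`; `pivot i` is the ray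
with smallest right-endpoint `x`-coordinate that passes its token in iteration `i`. -/
structure ModSSRTrace (R : Finset Ray) (V : Finset VSeg) where
  steps : ℕ
  Rs : ℕ → Finset Ray
  Vs : ℕ → Finset VSeg
  Ss : ℕ → Finset Ray
  Tok : ℕ → Ray → Finset Ray
  pivot : ℕ → Ray
  init_R : Rs 0 = R
  init_V : Vs 0 = V
  init_S : Ss 0 = ∅
  init_T : ∀ r, Tok 0 r = {r}
  running : ∀ i < steps, Vs i ≠ ∅
  /-- step (a): collect all rays critical after the previous iteration. -/
  S_step : ∀ i, 1 ≤ i → i ≤ steps →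
    Ss i = Ss (i-1) ∪ (Rs (i-1)).filter (fun r => critical (Rs (i-1)) (Vs (i-1)) r)
  /-- step (b): delete all segments intersecting some solution ray. -/
  V_step : ∀ i, 1 ≤ i → i ≤ steps →
    Vs i = (Vs (i-1)).filter (fun v => ∀ r ∈ Ss i, ¬ hits r v)
  /-- step (c): the pivot is a surviving non-solution ray of smallest right-endpoint
  `x`-coordinate. -/
  pivot_mem : ∀ i, 1 ≤ i → i ≤ steps → pivot i ∈ Rs (i-1) \ Ss i
  pivot_min : ∀ i, 1 ≤ i → i ≤ steps → ∀ r ∈ Rs (i-1) \ Ss i, (pivot i).x ≤ r.x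
  /-- token passing: each label `x` in the pivot's token migrates to a neighbour
  (just above / just below in `Rs (i-1) \ Ss i`) whenever some surviving segment
  intersects `x`, the pivot and that neighbour; then the pivot's token is emptied. -/
  Tok_step : ∀ i, 1 ≤ i → i ≤ steps → ∀ r' : Ray,
    Tok i r' =
      if r' = pivot i then ∅
      else if justAbove (Rs (i-1) \ Ss i) (pivot i) r'
              ∨ justAbove (Rs (i-1) \ Ss i) r' (pivot i) then
        Tok (i-1) r' ∪ (Tok (i-1) (pivot i)).filter
          (fun x => ∃ v ∈ Vs i, hits x v ∧ hits (pivot i) v ∧ hits r' v)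
      else Tok (i-1) r'
  /-- deletion of the pivot and the solution rays. -/
  R_step : ∀ i, 1 ≤ i → i ≤ steps →
    Rs i = (Rs (i-1) \ Ss i).erase (pivot i)
  /-- termination: no segment is left. -/
  term : Vs steps = ∅

/-!
A ray `r` enters the solution when it is the only surviving ray meeting some surviving segment
`ν`, and its token is frozen from then on. While a segment `v` survives, the label of every ray
meeting `v` sits on a surviving ray meeting `v`: when that ray is the pivot, its vertical
neighbour towards another surviving ray meeting `v` meets `v` too, because the pivot has minimal
`x`. Hence `N(ν) ⊆ T_r`, so `1 ≤ ∑_{ρ ∈ T_r} x ρ` for every fractional cover `x`. Conversely a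
label `ρ` lies in at most two tokens: every holder lies weakly to the right of `ρ`, and no other
holder or surviving ray lies in the closed horizontal strip between `ρ` and a holder (a selected
ray in that strip would have killed the segment carrying the label), so two holders lie on
opposite sides of `ρ`. Double counting the pairs `(r, ρ)` with `ρ ∈ T_r` gives `|S| ≤ 2 ∑ x`.
-/

open scoped Interval

section LinearOrder
variable {α : Type*} [LinearOrder α] {a b c x y : α}

lemma Set.mem_uIoo_iff : c ∈ Set.uIoo x y ↔ x < c ∧ c < y ∨ y < c ∧ c < x := by
  rw [Set.uIoo_eq_union, Set.mem_union, Set.mem_Ioo, Set.mem_Ioo]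

lemma Set.mem_uIoo_of_notMem_uIcc (h₁ : x ∉ [[c, y]]) (h₂ : y ∉ [[c, x]]) :
    c ∈ Set.uIoo x y := by
  simp only [Set.mem_uIcc, Set.mem_uIoo_iff] at *
  grind

lemma Set.mem_uIoo_of_mem_uIcc_of_notMem_uIcc (h : x ∈ [[a, c]]) (h' : x ∉ [[a, b]])
    (hxc : x ≠ c) : x ∈ Set.uIoo b c := by
  simp only [Set.mem_uIcc, Set.mem_uIoo_iff] at *
  grind

lemma Finset.card_le_two_of_pairwise_mem_uIoo {ι : Type*} (s : Finset ι) (f : ι → α) (c : α)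
    (h : ∀ i ∈ s, ∀ j ∈ s, i ≠ j → c ∈ Set.uIoo (f i) (f j)) : s.card ≤ 2 := by
  by_contra! hs
  obtain ⟨i, hi, j, hj, k, hk, hij, hik, hjk⟩ := Finset.two_lt_card.mp hs
  have h₁ := Set.mem_uIoo_iff.mp (h i hi j hj hij)
  have h₂ := Set.mem_uIoo_iff.mp (h i hi k hk hik)
  have h₃ := Set.mem_uIoo_iff.mp (h j hj k hk hjk)
  rcases h₁ with h₁ | h₁ <;> rcases h₂ with h₂ | h₂ <;> rcases h₃ with h₃ | h₃ <;> order

end LinearOrder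

open Finset in
lemma Finset.card_le_mul_sum_of_one_le_sum_filter {α β : Type*} {S : Finset α} {B : Finset β}
    {rel : α → β → Prop} [∀ a b, Decidable (rel a b)] {x : β → ℝ} {k : ℕ}
    (hx : ∀ b ∈ B, 0 ≤ x b) (hcover : ∀ a ∈ S, 1 ≤ ∑ b ∈ B with rel a b, x b)
    (hdeg : ∀ b ∈ B, #{a ∈ S | rel a b} ≤ k) :
    (#S : ℝ) ≤ k * ∑ b ∈ B, x b :=
  calc (#S : ℝ) = ∑ _a ∈ S, 1 := by simp
    _ ≤ ∑ a ∈ S, ∑ b ∈ B.bipartiteAbove rel a, x b := sum_le_sum hcover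
    _ = ∑ b ∈ B, #(S.bipartiteBelow rel b) * x b := by
      rw [sum_sum_bipartiteAbove_eq_sum_sum_bipartiteBelow]
      simp only [sum_const, nsmul_eq_mul]
    _ ≤ ∑ b ∈ B, k * x b := sum_le_sum fun b hb =>
      mul_le_mul_of_nonneg_right (by exact_mod_cast hdeg b hb) (hx b hb)
    _ = k * ∑ b ∈ B, x b := (mul_sum ..).symm

lemma hits_of_mem_uIcc {a b r : Ray} {v : VSeg} (ha : hits a v) (hb : hits b v)
    (hy : r.y ∈ [[a.y, b.y]]) (hx : v.x ≤ r.x) : hits r v :=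
  ⟨hx, Set.uIcc_subset_Icc ⟨ha.2.1, ha.2.2⟩ ⟨hb.2.1, hb.2.2⟩ hy⟩

def Adjacent (D : Finset Ray) (p a : Ray) : Prop :=
  justAbove D p a ∨ justAbove D a p

namespace Adjacent
variable {D : Finset Ray} {p a : Ray}

lemma mem (h : Adjacent D p a) : a ∈ D := h.elim (·.2.1) (·.1)

lemma ne (h : Adjacent D p a) : a ≠ p := by
  rintro rfl
  exact h.elim (fun h => lt_irrefl _ h.2.2.1) (fun h => lt_irrefl _ h.2.2.1)

lemma notMem_uIoo (h : Adjacent D p a) {z : Ray} (hz : z ∈ D) : z.y ∉ Set.uIoo p.y a.y := by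
  rcases h with h | h
  · rw [Set.uIoo_of_lt h.2.2.1]
    exact h.2.2.2 z hz
  · rw [Set.uIoo_of_gt h.2.2.1]
    exact h.2.2.2 z hz

end Adjacent

lemma exists_adjacent {D : Finset Ray} {p r : Ray} (hp : p ∈ D) (hr : r ∈ D) (hy : p.y ≠ r.y) :
    ∃ a, Adjacent D p a ∧ a.y ∈ [[p.y, r.y]] := by
  rcases hy.lt_or_gt with hlt | hgt
  · obtain ⟨a, ha, hmin⟩ := ({z ∈ D | p.y < z.y} : Finset Ray).exists_min_image (·.y)
      ⟨r, Finset.mem_filter.mpr ⟨hr, hlt⟩⟩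
    rw [Finset.mem_filter] at ha
    refine ⟨a, Or.inl ⟨hp, ha.1, ha.2, fun z hz ⟨hpz, hza⟩ => ?_⟩,
      Set.mem_uIcc_of_le ha.2.le (hmin r (Finset.mem_filter.mpr ⟨hr, hlt⟩))⟩
    exact (hmin z (Finset.mem_filter.mpr ⟨hz, hpz⟩)).not_gt hza
  · obtain ⟨a, ha, hmax⟩ := ({z ∈ D | z.y < p.y} : Finset Ray).exists_max_image (·.y)
      ⟨r, Finset.mem_filter.mpr ⟨hr, hgt⟩⟩
    rw [Finset.mem_filter] at ha
    refine ⟨a, Or.inr ⟨ha.1, hp, ha.2, fun z hz ⟨haz, hzp⟩ => ?_⟩,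
      Set.mem_uIcc_of_ge (hmax r (Finset.mem_filter.mpr ⟨hr, hgt⟩)) ha.2.le⟩
    exact (hmax z (Finset.mem_filter.mpr ⟨hz, hzp⟩)).not_gt haz

/-- Invariant on the holders of the label `ρ` (the rays `r` with `ρ ∈ tok r`), where `Rc` are
the surviving and `Sc` the selected rays. The band condition puts any two holders on opposite
sides of `ρ`. -/
structure LabelInvariant (Rc Sc : Finset Ray) (tok : Ray → Finset Ray) (ρ : Ray) : Prop where
  mem : ∀ r, ρ ∈ tok r → r ∈ Rc ∨ r ∈ Sc
  x_le : ∀ r, ρ ∈ tok r → ρ.x ≤ r.x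
  band : ∀ r, ρ ∈ tok r → ∀ z, z ∈ Rc ∨ ρ ∈ tok z → z.y ∈ [[ρ.y, r.y]] → z = r

open Finset in
lemma LabelInvariant.card_filter_le_two {Rc Sc : Finset Ray} {tok : Ray → Finset Ray} {ρ : Ray}
    (h : LabelInvariant Rc Sc tok ρ) (s : Finset Ray) : #{r ∈ s | ρ ∈ tok r} ≤ 2 := by
  refine card_le_two_of_pairwise_mem_uIoo _ Ray.y ρ.y fun r hr r' hr' hne => ?_
  rw [mem_filter] at hr hr'
  exact Set.mem_uIoo_of_notMem_uIcc (fun hy => hne (h.band r' hr'.2 r (Or.inr hr.2) hy))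
    (fun hy => hne (h.band r hr.2 r' (Or.inr hr'.2) hy).symm)

namespace ModSSRTrace

variable {R : Finset Ray} {V : Finset VSeg} (t : ModSSRTrace R V) {i j k : ℕ} {ρ : Ray}

lemma mem_Rs_succ (hj : j < t.steps) {r : Ray} :
    r ∈ t.Rs (j + 1) ↔ r ≠ t.pivot (j + 1) ∧ r ∈ t.Rs j \ t.Ss (j + 1) := by
  rw [← Finset.mem_erase]
  simpa using congrArg (r ∈ ·) (t.R_step (j + 1) (by omega) (by omega))

lemma Ss_succ (hj : j < t.steps) :
    t.Ss (j + 1) = t.Ss j ∪ {r ∈ t.Rs j | critical (t.Rs j) (t.Vs j) r} := by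
  simpa using t.S_step (j + 1) (by omega) (by omega)

lemma mem_Vs_succ (hj : j < t.steps) {v : VSeg} :
    v ∈ t.Vs (j + 1) ↔ v ∈ t.Vs j ∧ ∀ r ∈ t.Ss (j + 1), ¬ hits r v := by
  have h := t.V_step (j + 1) (by omega) (by omega)
  simp only [Nat.add_sub_cancel] at h
  rw [h, Finset.mem_filter]

lemma pivot_mem_sdiff (hj : j < t.steps) : t.pivot (j + 1) ∈ t.Rs j \ t.Ss (j + 1) := by
  simpa using t.pivot_mem (j + 1) (by omega) (by omega)

lemma pivot_x_le (hj : j < t.steps) {r : Ray} (hr : r ∈ t.Rs j \ t.Ss (j + 1)) :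
    (t.pivot (j + 1)).x ≤ r.x := by
  simpa using t.pivot_min (j + 1) (by omega) (by omega) r (by simpa using hr)

lemma mem_Tok_succ (hj : j < t.steps) {r : Ray} :
    ρ ∈ t.Tok (j + 1) r ↔ r ≠ t.pivot (j + 1) ∧ (ρ ∈ t.Tok j r ∨
      Adjacent (t.Rs j \ t.Ss (j + 1)) (t.pivot (j + 1)) r ∧ ρ ∈ t.Tok j (t.pivot (j + 1)) ∧
        ∃ v ∈ t.Vs (j + 1), hits ρ v ∧ hits (t.pivot (j + 1)) v ∧ hits r v) := by
  have h := t.Tok_step (j + 1) (by omega) (by omega) r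
  simp only [Nat.add_sub_cancel] at h
  rw [h, Adjacent]
  split_ifs <;> simp_all

lemma Ss_subset_Ss_succ (hj : j < t.steps) : t.Ss j ⊆ t.Ss (j + 1) := by
  rw [t.Ss_succ hj]
  exact Finset.subset_union_left

lemma Ss_mono (hik : i ≤ k) (hk : k ≤ t.steps) : t.Ss i ⊆ t.Ss k := by
  induction k, hik using Nat.le_induction with
  | base => rfl
  | succ k _ ih => exact (ih (by omega)).trans (t.Ss_subset_Ss_succ (by omega))

lemma Rs_subset (hi : i ≤ t.steps) : t.Rs i ⊆ R := by
  induction i with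
  | zero => rw [t.init_R]
  | succ j ih =>
    intro r hr
    exact ih (by omega) (Finset.mem_sdiff.mp ((t.mem_Rs_succ (by omega)).mp hr).2).1

lemma Vs_subset (hi : i ≤ t.steps) : t.Vs i ⊆ V := by
  induction i with
  | zero => rw [t.init_V]
  | succ j ih => exact fun v hv => ih (by omega) ((t.mem_Vs_succ (by omega)).mp hv).1

lemma Ss_subset (hi : i ≤ t.steps) : t.Ss i ⊆ R := by
  induction i with
  | zero => simp [t.init_S]
  | succ j ih =>
    rw [t.Ss_succ (by omega)]
    exact Finset.union_subset (ih (by omega))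
      ((Finset.filter_subset _ _).trans (t.Rs_subset (by omega)))

lemma exists_mem_Ss_hits : ∀ v ∈ V, ∃ r ∈ t.Ss t.steps, hits r v := by
  intro v hv
  by_contra! hmiss
  have hsurv : ∀ i ≤ t.steps, v ∈ t.Vs i := by
    intro i hi
    induction i with
    | zero => rwa [t.init_V]
    | succ j ih =>
      exact (t.mem_Vs_succ hi).mpr ⟨ih (by omega), fun r hr => hmiss r (t.Ss_mono hi le_rfl hr)⟩
  simpa [t.term] using hsurv t.steps le_rfl

lemma Tok_succ_of_mem_Ss (hj : j < t.steps) {r : Ray} (hr : r ∈ t.Ss (j + 1)) :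
    t.Tok (j + 1) r = t.Tok j r := by
  have hrD : r ∉ t.Rs j \ t.Ss (j + 1) := fun h => (Finset.mem_sdiff.mp h).2 hr
  ext ρ
  rw [t.mem_Tok_succ hj]
  exact ⟨fun h => h.2.resolve_right fun h' => hrD h'.1.mem,
    fun h => ⟨fun hp => hrD (hp ▸ t.pivot_mem_sdiff hj), Or.inl h⟩⟩

lemma Tok_eq_of_mem_Ss {r : Ray} (hr : r ∈ t.Ss (j + 1)) (hjk : j ≤ k) (hk : k ≤ t.steps) :
    t.Tok k r = t.Tok j r := by
  induction k, hjk using Nat.le_induction with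
  | base => rfl
  | succ k hjk ih =>
    rw [t.Tok_succ_of_mem_Ss hk (t.Ss_mono (by omega) hk hr), ih (by omega)]

lemma exists_mem_Rs_hits_mem_Tok (hR : Set.InjOn Ray.y R) (hi : i ≤ t.steps) {v : VSeg}
    (hv : v ∈ t.Vs i) (hρ : ρ ∈ R) (hρv : hits ρ v) :
    ∃ r ∈ t.Rs i, hits r v ∧ ρ ∈ t.Tok i r := by
  induction i with
  | zero => exact ⟨ρ, by rwa [t.init_R], hρv, by simp [t.init_T]⟩
  | succ j ih =>
    have hj : j < t.steps := hi
    obtain ⟨hvj, hvS⟩ := (t.mem_Vs_succ hj).mp hv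
    obtain ⟨r, hr, hrv, hρr⟩ := ih (by omega) hvj
    have hrD : r ∈ t.Rs j \ t.Ss (j + 1) := Finset.mem_sdiff.mpr ⟨hr, fun h => hvS r h hrv⟩
    by_cases hrp : r = t.pivot (j + 1)
    · subst hrp
      -- the pivot was not selected, so it is not the only surviving ray meeting `v`
      obtain ⟨r', hr', hr'v, hr'p⟩ : ∃ r' ∈ t.Rs j, hits r' v ∧ r' ≠ t.pivot (j + 1) := by
        by_contra! h
        refine (Finset.mem_sdiff.mp hrD).2 ((t.Ss_succ hj).symm ▸ Finset.mem_union_right _ ?_)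
        exact Finset.mem_filter.mpr ⟨hr, hr, v, hvj, hrv, fun r' hr' hr'v => h r' hr' hr'v⟩
      have hr'D : r' ∈ t.Rs j \ t.Ss (j + 1) :=
        Finset.mem_sdiff.mpr ⟨hr', fun h => hvS r' h hr'v⟩
      have hy : (t.pivot (j + 1)).y ≠ r'.y := fun h =>
        hr'p (hR (t.Rs_subset (by omega) hr') (t.Rs_subset (by omega) hr) h.symm)
      obtain ⟨a, ha, hay⟩ := exists_adjacent hrD hr'D hy
      have hav : hits a v := hits_of_mem_uIcc hrv hr'v hay (hrv.1.trans (t.pivot_x_le hj ha.mem))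
      exact ⟨a, (t.mem_Rs_succ hj).mpr ⟨ha.ne, ha.mem⟩, hav,
        (t.mem_Tok_succ hj).mpr ⟨ha.ne, Or.inr ⟨ha, hρr, v, hv, hρv, hrv, hav⟩⟩⟩
    · exact ⟨r, (t.mem_Rs_succ hj).mpr ⟨hrp, hrD⟩, hrv, (t.mem_Tok_succ hj).mpr ⟨hrp, Or.inl hρr⟩⟩

lemma exists_critical_of_mem_Ss {r : Ray} (hi : i ≤ t.steps) (hr : r ∈ t.Ss i) :
    ∃ j < i, critical (t.Rs j) (t.Vs j) r ∧ r ∈ t.Ss (j + 1) := by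
  induction i with
  | zero => simp [t.init_S] at hr
  | succ j ih =>
    rw [t.Ss_succ hi, Finset.mem_union] at hr
    rcases hr with h | h
    · obtain ⟨k, hk, hcrit⟩ := ih (by omega) h
      exact ⟨k, by omega, hcrit⟩
    · exact ⟨j, by omega, (Finset.mem_filter.mp h).2,
        (t.Ss_succ hi).symm ▸ Finset.mem_union_right _ h⟩

lemma exists_filter_hits_subset_Tok (hR : Set.InjOn Ray.y R) {r : Ray}
    (hr : r ∈ t.Ss t.steps) : ∃ v ∈ V, {ρ ∈ R | hits ρ v} ⊆ t.Tok t.steps r := by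
  obtain ⟨j, hj, ⟨-, v, hv, hrv, huniq⟩, hrS⟩ := t.exists_critical_of_mem_Ss le_rfl hr
  refine ⟨v, t.Vs_subset hj.le hv, fun ρ hρ => ?_⟩
  obtain ⟨hρR, hρv⟩ := Finset.mem_filter.mp hρ
  obtain ⟨r', hr', hr'v, hρr'⟩ := t.exists_mem_Rs_hits_mem_Tok hR hj.le hv hρR hρv
  rw [t.Tok_eq_of_mem_Ss hrS hj.le le_rfl, ← huniq r' hr' hr'v]
  exact hρr'

lemma labelInvariant_zero (hR : Set.InjOn Ray.y R) (hρ : ρ ∈ R) :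
    LabelInvariant (t.Rs 0) (t.Ss 0) (t.Tok 0) ρ := by
  have htok : ∀ r, ρ ∈ t.Tok 0 r ↔ r = ρ := fun r => by
    rw [t.init_T, Finset.mem_singleton, eq_comm]
  refine ⟨fun r hr => ?_, fun r hr => ?_, fun r hr z hz hzy => ?_⟩ <;>
    rw [htok] at hr <;> subst hr
  · rw [t.init_R]
    exact Or.inl hρ
  · exact le_rfl
  · rw [t.init_R, htok] at hz
    rw [Set.uIcc_self, Set.mem_singleton_iff] at hzy
    exact hR (hz.elim id (· ▸ hρ)) hρ hzy

lemma mem_Rs_or_mem_Ss_of_mem_Tok_succ (hj : j < t.steps)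
    (h : ∀ r, ρ ∈ t.Tok j r → r ∈ t.Rs j ∨ r ∈ t.Ss j) {r : Ray} (hr : ρ ∈ t.Tok (j + 1) r) :
    r ∈ t.Rs (j + 1) ∨ r ∈ t.Ss (j + 1) := by
  obtain ⟨hrp, hold | ⟨ha, -⟩⟩ := (t.mem_Tok_succ hj).mp hr
  · rcases h r hold with hrR | hrS
    · by_cases hrS : r ∈ t.Ss (j + 1)
      · exact Or.inr hrS
      · exact Or.inl ((t.mem_Rs_succ hj).mpr ⟨hrp, Finset.mem_sdiff.mpr ⟨hrR, hrS⟩⟩)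
    · exact Or.inr (t.Ss_subset_Ss_succ hj hrS)
  · exact Or.inl ((t.mem_Rs_succ hj).mpr ⟨hrp, ha.mem⟩)

lemma labelInvariant_succ (hR : Set.InjOn Ray.y R) (hj : j < t.steps)
    (h : LabelInvariant (t.Rs j) (t.Ss j) (t.Tok j) ρ) :
    LabelInvariant (t.Rs (j + 1)) (t.Ss (j + 1)) (t.Tok (j + 1)) ρ := by
  set p := t.pivot (j + 1)
  have mem : ∀ r, ρ ∈ t.Tok (j + 1) r → r ∈ t.Rs (j + 1) ∨ r ∈ t.Ss (j + 1) :=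
    fun r => t.mem_Rs_or_mem_Ss_of_mem_Tok_succ hj h.mem
  refine ⟨mem, fun r hr => ?_, fun r hr z hz hzy => ?_⟩
  · obtain ⟨-, hold | ⟨ha, hp, -⟩⟩ := (t.mem_Tok_succ hj).mp hr
    · exact h.x_le r hold
    · exact (h.x_le p hp).trans (t.pivot_x_le hj ha.mem)
  have hz' : z ∈ t.Rs (j + 1) ∨ z ∈ t.Ss (j + 1) ∧ ρ ∈ t.Tok j z := by
    refine hz.elim Or.inl fun hz => (mem z hz).imp_right fun hzS => ⟨hzS, ?_⟩
    obtain ⟨-, hold | ⟨ha, -⟩⟩ := (t.mem_Tok_succ hj).mp hz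
    exacts [hold, absurd hzS (Finset.mem_sdiff.mp ha.mem).2]
  have hz_old : z ∈ t.Rs j ∨ ρ ∈ t.Tok j z :=
    hz'.imp (fun hz => (Finset.mem_sdiff.mp ((t.mem_Rs_succ hj).mp hz).2).1) And.right
  obtain ⟨-, hold | ⟨ha, hp, v, hv, hρv, hpv, hrv⟩⟩ := (t.mem_Tok_succ hj).mp hr
  · exact h.band r hold z hz_old hzy
  have hzp : z ≠ p := by
    rintro rfl
    rcases hz' with hz | ⟨hzS, -⟩
    exacts [((t.mem_Rs_succ hj).mp hz).1 rfl, (Finset.mem_sdiff.mp (t.pivot_mem_sdiff hj)).2 hzS]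
  have hzR : z ∈ R := hz_old.elim (t.Rs_subset hj.le ·)
    fun hz => (h.mem z hz).elim (t.Rs_subset hj.le ·) (t.Ss_subset hj.le ·)
  have hrR : r ∈ R := t.Rs_subset hj.le (Finset.mem_sdiff.mp ha.mem).1
  -- `r` is a new holder next to the pivot `p`, so `z` would lie strictly between `p` and `r`
  by_contra hzr
  have hzmid : z.y ∈ Set.uIoo p.y r.y := Set.mem_uIoo_of_mem_uIcc_of_notMem_uIcc hzy
    (fun hzp' => hzp (h.band p hp z hz_old hzp')) (fun e => hzr (hR hzR hrR e))
  rcases hz' with hz | ⟨hzS, hz⟩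
  · exact ha.notMem_uIoo ((t.mem_Rs_succ hj).mp hz).2 hzmid
  · -- a selected `z` there meets `v`, which survived the selection
    exact ((t.mem_Vs_succ hj).mp hv).2 z hzS (hits_of_mem_uIcc hpv hrv
      (Set.uIoo_subset_uIcc_self hzmid) (hρv.1.trans (h.x_le z hz)))

lemma labelInvariant (hR : Set.InjOn Ray.y R) (hρ : ρ ∈ R) (hi : i ≤ t.steps) :
    LabelInvariant (t.Rs i) (t.Ss i) (t.Tok i) ρ := by
  induction i with
  | zero => exact t.labelInvariant_zero hR hρ
  | succ j ih => exact t.labelInvariant_succ hR hi (ih (by omega))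

end ModSSRTrace

theorem modSSR_two_approx_of_LP_general (R : Finset Ray) (V : Finset VSeg)
    (hRdisj : ∀ r ∈ R, ∀ r' ∈ R, r ≠ r' → r.y ≠ r'.y)
    (t : ModSSRTrace R V)
    (x : Ray → ℝ)
    (hx01 : ∀ r, 0 ≤ x r ∧ x r ≤ 1)
    (hxfeas : ∀ v ∈ V, 1 ≤ ∑ r ∈ R.filter (fun r => hits r v), x r) :
    (∀ v ∈ V, ∃ r ∈ t.Ss t.steps, hits r v) ∧
    ((t.Ss t.steps).card : ℝ) ≤ 2 * ∑ r ∈ R, x r := by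
  have hR : Set.InjOn Ray.y R := fun r hr r' hr' hy =>
    by_contra fun hne => hRdisj r hr r' hr' hne hy
  refine ⟨t.exists_mem_Ss_hits, ?_⟩
  refine Finset.card_le_mul_sum_of_one_le_sum_filter (rel := fun r ρ => ρ ∈ t.Tok t.steps r)
    (fun ρ _ => (hx01 ρ).1) (fun r hr => ?_)
    (fun ρ hρ => (t.labelInvariant hR hρ le_rfl).card_filter_le_two _)
  obtain ⟨v, hv, hsub⟩ := t.exists_filter_hits_subset_Tok hR hr
  refine (hxfeas v hv).trans (Finset.sum_le_sum_of_subset_of_nonneg ?_ fun ρ _ _ => (hx01 ρ).1)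
  exact fun ρ hρ => Finset.mem_filter.mpr ⟨(Finset.mem_filter.mp hρ).1, hsub hρ⟩

/-- Lemma 2: the solution `S` returned by MOD-SSR intersects all
segments, and its cardinality is at most twice the cost of any feasible fractional
solution of the LP relaxation of the SSR covering program; hence
`|S| ≤ 2·OPT(Q_l)` and consequently `OPT(Q) ≤ 2·OPT(Q_l)`. -/
theorem modSSR_two_approx_of_LP (R : Finset Ray) (V : Finset VSeg)
    (hVok : ∀ v ∈ V, v.lo ≤ v.hi)
    (hRdisj : ∀ r ∈ R, ∀ r' ∈ R, r ≠ r' → r.y ≠ r'.y)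
    (hVdisj : ∀ v ∈ V, ∀ w ∈ V, v ≠ w → v.x ≠ w.x)
    (hfeas : ∀ v ∈ V, ∃ r ∈ R, hits r v)
    (t : ModSSRTrace R V)
    (x : Ray → ℝ)
    (hx01 : ∀ r, 0 ≤ x r ∧ x r ≤ 1)
    (hxfeas : ∀ v ∈ V, 1 ≤ ∑ r ∈ R.filter (fun r => hits r v), x r) :
    (∀ v ∈ V, ∃ r ∈ t.Ss t.steps, hits r v) ∧
    ((t.Ss t.steps).card : ℝ) ≤ 2 * ∑ r ∈ R, x r :=
  modSSR_two_approx_of_LP_general R V hRdisj t x hx01 hxfeas
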